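/- arXiv:2504.14678 — 2 statements merged into one kernel-verified Lean document; each statement's English description precedes it below -/
import Mathlib

section
/- Let μ be a free measure on ℕ and let F = {A ⊆ ℕ : μ(A) = 1}. Then F, identified via characteristic functions with a subset of the Cantor space ℕ → Bool equipped with the product topology, is not meager. -/
open Filter

/-- A finitely additive probability measure defined on all subsets of `ℕ`. -/
def IsMeasure (μ : Set ℕ → ℝ) : Prop :=
  (∀ A : Set ℕ, 0 ≤ μ A ∧ μ A ≤ 1) ∧ μ Set.univ = 1 ∧
    ∀ A B : Set ℕ, Disjoint A B → μ (A ∪ B) = μ A + μ B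

/-- A measure is free if it vanishes on finite sets. -/
def IsFree (μ : Set ℕ → ℝ) : Prop := ∀ A : Set ℕ, A.Finite → μ A = 0

/-- A function is finite-to-one if all fibers are finite. -/
def FinToOne (f : ℕ → ℕ) : Prop := ∀ n : ℕ, (f ⁻¹' {n}).Finite

/-- Rudin-Blass reducibility: `ν ≤_RB μ` via a finite-to-one map. -/
def RBLe (ν μ : Set ℕ → ℝ) : Prop :=
  ∃ f : ℕ → ℕ, FinToOne f ∧ ∀ A : Set ℕ, μ (f ⁻¹' A) = ν A

/-- Rudin-Keisler reducibility: `ν ≤_RK μ`. -/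
def RKLe (ν μ : Set ℕ → ℝ) : Prop :=
  ∃ f : ℕ → ℕ, ∀ A : Set ℕ, μ (f ⁻¹' A) = ν A

/-- A measure is shift invariant if `μ(A + 1) = μ(A)`. -/
def ShiftInvariant (μ : Set ℕ → ℝ) : Prop :=
  ∀ A : Set ℕ, μ ((fun n => n + 1) '' A) = μ A

/-- A measure extends the asymptotic density. -/
def ExtendsDensity (μ : Set ℕ → ℝ) : Prop :=
  ∀ (A : Set ℕ) (d : ℝ),
    Tendsto (fun n : ℕ => ((A ∩ Set.Iio n).ncard : ℝ) / n) atTop (nhds d) → μ A = d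

/-- A partition of `ℕ` indexed by `ℕ`. -/
def IsPartition (A : ℕ → Set ℕ) : Prop :=
  Pairwise (Function.onFun Disjoint A) ∧ (⋃ n, A n) = Set.univ

/-- A selector of a partition: meets each piece in at most one point. -/
def IsSelector (S : Set ℕ) (A : ℕ → Set ℕ) : Prop :=
  ∀ n : ℕ, (S ∩ A n).Subsingleton

/-- A Q-measure: each partition into finite sets has a selector of full measure. -/
def IsQMeasure (μ : Set ℕ → ℝ) : Prop :=
  ∀ A : ℕ → Set ℕ, IsPartition A → (∀ n, (A n).Finite) →
    ∃ S : Set ℕ, IsSelector S A ∧ μ S = 1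

/-- A Q⁺-measure: each partition into finite sets has a selector of positive measure. -/
def IsQPlusMeasure (μ : Set ℕ → ℝ) : Prop :=
  ∀ A : ℕ → Set ℕ, IsPartition A → (∀ n, (A n).Finite) →
    ∃ S : Set ℕ, IsSelector S A ∧ 0 < μ S

/-- A P-measure: each partition has a pseudo-selector of the largest possible measure. -/
def IsPMeasure (μ : Set ℕ → ℝ) : Prop :=
  ∀ A : ℕ → Set ℕ, IsPartition A →
    ∃ S : Set ℕ, (∀ n, (S ∩ A n).Finite) ∧ μ S = 1 - ∑' n, μ (A n)

/-- A selective measure: each partition has a selector of the largest possible measure. -/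
def IsSelectiveMeasure (μ : Set ℕ → ℝ) : Prop :=
  ∀ A : ℕ → Set ℕ, IsPartition A →
    ∃ S : Set ℕ, IsSelector S A ∧ μ S = 1 - ∑' n, μ (A n)

/-- A non-atomic measure: finite partitions into pieces of arbitrarily small measure. -/
def NonAtomic (μ : Set ℕ → ℝ) : Prop :=
  ∀ ε : ℝ, 0 < ε → ∃ (N : ℕ) (P : Fin N → Set ℕ),
    Pairwise (Function.onFun Disjoint P) ∧ (⋃ i, P i) = Set.univ ∧ ∀ i, μ (P i) < ε

/-- The continuum hypothesis: `2 ^ ℵ₀ = ℵ₁`. -/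
def CH : Prop := (2 : Cardinal.{0}) ^ Cardinal.aleph0.{0} = Cardinal.aleph.{0} 1


open Classical in
/-- The characteristic function of a set of naturals, as a point of the Cantor space
`ℕ → Bool`. -/
noncomputable def chiSet (A : Set ℕ) : ℕ → Bool := fun n => decide (n ∈ A)

/-!
If the measure-one sets formed a meagre family, Talagrand's argument would give a finite-to-one
`g : ℕ → ℕ` such that every set of measure one meets all but finitely many fibres of `g`: the
`k`-th fibre is an interval carrying a bit pattern that forces every point agreeing with it there
into the `k`-th member of a decreasing sequence of dense open sets whose intersection misses the
family; enlarging a set by the patterns on the fibres it misses keeps it in the family.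
The pushforward `T ↦ μ (g ⁻¹' T)` is again a free measure, and repeatedly halving infinite
sets and diagonalising gives an infinite null set `D` for it. Then `(g ⁻¹' D)ᶜ` has measure one
but misses the infinitely many fibres over `D`.
-/

open Set

namespace IsMeasure

variable {μ : Set ℕ → ℝ}

lemma nonneg (hμ : IsMeasure μ) (A : Set ℕ) : 0 ≤ μ A := (hμ.1 A).1

lemma le_one (hμ : IsMeasure μ) (A : Set ℕ) : μ A ≤ 1 := (hμ.1 A).2

lemma union (hμ : IsMeasure μ) {A B : Set ℕ} (h : Disjoint A B) : μ (A ∪ B) = μ A + μ B :=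
  hμ.2.2 A B h

lemma mono (hμ : IsMeasure μ) {A B : Set ℕ} (h : A ⊆ B) : μ A ≤ μ B := by
  have := hμ.union (disjoint_sdiff_right (s := A) (t := B))
  rw [union_sdiff_cancel h] at this
  linarith [hμ.nonneg (B \ A)]

lemma compl (hμ : IsMeasure μ) (A : Set ℕ) : μ Aᶜ = 1 - μ A := by
  have := hμ.union (disjoint_compl_right (a := A))
  rw [union_compl_self, hμ.2.1] at this
  linarith

lemma preimage (hμ : IsMeasure μ) (g : ℕ → ℕ) : IsMeasure fun T => μ (g ⁻¹' T) :=
  ⟨fun _ => hμ.1 _, hμ.2.1, fun _ _ h => by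
    simpa only [preimage_union] using hμ.union (h.preimage g)⟩

lemma exists_infinite_subset_two_mul_le (hμ : IsMeasure μ) {T : Set ℕ} (hT : T.Infinite) :
    ∃ T' ⊆ T, T'.Infinite ∧ 2 * μ T' ≤ μ T := by
  obtain ⟨t, u, rfl, hdisj, hcard⟩ := hT.exists_union_disjoint_cardinal_eq_of_infinite
  have hfin : t.Finite ↔ u.Finite := by
    rw [← Cardinal.lt_aleph0_iff_set_finite, ← Cardinal.lt_aleph0_iff_set_finite, hcard]
  have ht : t.Infinite := fun ht => hT (ht.union (hfin.1 ht))
  have hu : u.Infinite := fun hu => hT ((hfin.2 hu).union hu)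
  rw [hμ.union hdisj]
  rcases le_total (μ t) (μ u) with h | h
  · exact ⟨t, subset_union_left, ht, by linarith⟩
  · exact ⟨u, subset_union_right, hu, by linarith⟩

end IsMeasure

lemma IsFree.preimage {μ : Set ℕ → ℝ} (hμ : IsFree μ) {g : ℕ → ℕ} (hg : FinToOne g) :
    IsFree fun T => μ (g ⁻¹' T) :=
  fun _ hT => hμ _ (hT.preimage' fun k _ => hg k)

lemma exists_infinite_forall_diff_finite_of_antitone {T : ℕ → Set ℕ} (hanti : Antitone T)
    (hT : ∀ L, (T L).Infinite) : ∃ D : Set ℕ, D.Infinite ∧ ∀ L, (D \ T L).Finite := by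
  choose d hdT hd using fun L => (hT L).exists_gt L
  refine ⟨range d, infinite_of_not_bddAbove ?_, fun L => ((finite_Iio L).image d).subset ?_⟩
  · rintro ⟨b, hb⟩
    exact (hd b).not_ge (hb (mem_range_self b))
  · rintro _ ⟨⟨j, rfl⟩, hj⟩
    exact ⟨j, lt_of_not_ge fun hLj => hj (hanti hLj (hdT j)), rfl⟩

lemma IsMeasure.exists_infinite_null {μ : Set ℕ → ℝ} (hμ : IsMeasure μ) (hfree : IsFree μ) :
    ∃ D : Set ℕ, D.Infinite ∧ μ D = 0 := by
  have hstep : ∀ T : {T : Set ℕ // T.Infinite},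
      ∃ T' : {T : Set ℕ // T.Infinite}, T'.1 ⊆ T.1 ∧ 2 * μ T' ≤ μ T := fun ⟨_, hT⟩ =>
    let ⟨T', hT'T, hT', hle⟩ := hμ.exists_infinite_subset_two_mul_le hT
    ⟨⟨T', hT'⟩, hT'T, hle⟩
  choose next hsub hle using hstep
  set T : ℕ → Set ℕ := fun L => (next^[L] ⟨univ, infinite_univ⟩).1 with hT
  have hsucc : ∀ L, T (L + 1) = (next (next^[L] ⟨univ, infinite_univ⟩)).1 := fun L => by
    simp only [hT, Function.iterate_succ_apply']
  have hanti : Antitone T := antitone_nat_of_succ_le fun L => hsucc L ▸ hsub _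
  have hbound : ∀ L, μ (T L) ≤ (1 / 2) ^ L := by
    intro L
    induction L with
    | zero => exact hμ.le_one _
    | succ L ih => rw [hsucc, pow_succ]; linarith [hle (next^[L] ⟨univ, infinite_univ⟩)]
  obtain ⟨D, hD, hDT⟩ :=
    exists_infinite_forall_diff_finite_of_antitone hanti fun L => (next^[L] _).2
  refine ⟨D, hD, le_antisymm ?_ (hμ.nonneg D)⟩
  refine ge_of_tendsto'
    (tendsto_pow_atTop_nhds_zero_of_lt_one (r := (1 / 2 : ℝ)) (by norm_num) (by norm_num))
    fun L => ?_
  calc μ D = μ (D ∩ T L) + μ (D \ T L) := by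
        rw [← hμ.union disjoint_sdiff_inter.symm, inter_union_sdiff]
    _ ≤ (1 / 2) ^ L + 0 :=
      add_le_add ((hμ.mono inter_subset_right).trans (hbound L)) (hfree _ (hDT L)).le
    _ = (1 / 2) ^ L := add_zero _

def xorHomeomorph {ι : Type*} (v : ι → Bool) : (ι → Bool) ≃ₜ (ι → Bool) where
  toFun x i := xor (v i) (x i)
  invFun x i := xor (v i) (x i)
  left_inv x := by simp
  right_inv x := by simp
  continuous_toFun := continuous_pi fun i =>
    (continuous_of_discreteTopology (f := xor (v i))).comp (continuous_apply i)
  continuous_invFun := continuous_pi fun i =>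
    (continuous_of_discreteTopology (f := xor (v i))).comp (continuous_apply i)

@[simp]
lemma xorHomeomorph_apply {ι : Type*} (v x : ι → Bool) (i : ι) :
    xorHomeomorph v x i = xor (v i) (x i) := rfl

@[simp]
lemma xorHomeomorph_xorHomeomorph {ι : Type*} (v x : ι → Bool) :
    xorHomeomorph v (xorHomeomorph v x) = x := by ext; simp

lemma exists_Ico_pattern_forcing_mem {U : Set (ℕ → Bool)} (hUo : IsOpen U) (hUd : Dense U)
    (m : ℕ) :
    ∃ m' > m, ∃ p : ℕ → Bool, ∀ x : ℕ → Bool, (∀ i ∈ Ico m m', x i = p i) → x ∈ U := by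
  -- Flipping bits below `m` is a homeomorphism, so a point of `W` carries a pattern on
  -- `[m, m')` that forces membership in `U` whatever the bits below `m` are.
  set W := ⋂₀ ((fun F => xorHomeomorph (chiSet F) ⁻¹' U) '' 𝒫 Iio m)
  have hfin := ((finite_Iio m).powerset.image fun F => xorHomeomorph (chiSet F) ⁻¹' U)
  have hWo : IsOpen W :=
    hfin.isOpen_sInter (forall_mem_image.2 fun F _ => hUo.preimage (Homeomorph.continuous _))
  have hWd : Dense W :=
    hfin.dense_sInter (forall_mem_image.2 fun F _ => hUo.preimage (Homeomorph.continuous _))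
      (forall_mem_image.2 fun F _ => hUd.preimage (Homeomorph.isOpenMap _))
  obtain ⟨p, hp⟩ := hWd.nonempty
  obtain ⟨_, ⟨q, n, rfl⟩, hpq, hW⟩ :=
    (PiNat.isTopologicalBasis_cylinders _).exists_subset_of_mem_open hp hWo
  rw [← PiNat.mem_cylinder_iff_eq.1 hpq] at hW
  refine ⟨n + m + 1, by omega, p, fun x hx => ?_⟩
  set F : Set ℕ := {i | i < m ∧ x i ≠ p i}
  have hxF : xorHomeomorph (chiSet F) x ∈ W := hW fun i hi => by
    by_cases him : i < m
    · by_cases hxi : x i = p i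
      · simp [chiSet, F, hxi]
      · cases hx' : x i <;> cases hp' : p i <;> simp_all [chiSet, F]
    · simp [chiSet, F, him, hx i ⟨not_lt.1 him, by omega⟩]
  simpa using (mem_sInter.1 hxF) _ ⟨F, fun i hi => hi.1, rfl⟩

lemma StrictMono.exists_finToOne_Ico_subset {n : ℕ → ℕ} (hn : StrictMono n) :
    ∃ g : ℕ → ℕ, FinToOne g ∧ ∀ k, Ico (n k) (n (k + 1)) ⊆ g ⁻¹' {k} := by
  classical
  have h : ∀ i, ∃ k, i < n (k + 1) := fun i => ⟨i, (Nat.lt_succ_self i).trans_le (hn.id_le _)⟩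
  refine ⟨fun i => Nat.find (h i), fun k => (finite_Iio (n (k + 1))).subset ?_, fun k i hi => ?_⟩
  · rintro i rfl
    exact Nat.find_spec (h i)
  · exact (Nat.find_eq_iff _).2 ⟨hi.2, fun j hj => not_lt.2 ((hn.monotone hj).trans hi.1)⟩

lemma exists_finToOne_pattern_forcing_mem {U : ℕ → Set (ℕ → Bool)} (hUo : ∀ k, IsOpen (U k))
    (hUd : ∀ k, Dense (U k)) :
    ∃ g : ℕ → ℕ, FinToOne g ∧ ∃ p : ℕ → Bool,
      ∀ k x, (∀ i ∈ g ⁻¹' {k}, x i = p i) → x ∈ U k := by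
  choose next hnext pat hpat using fun k => exists_Ico_pattern_forcing_mem (hUo k) (hUd k)
  set n : ℕ → ℕ := fun k => Nat.rec 0 (fun k nk => next k nk) k
  obtain ⟨g, hg, hgn⟩ :=
    (strictMono_nat_of_lt_succ fun k => hnext k (n k)).exists_finToOne_Ico_subset
  refine ⟨g, hg, fun i => pat (g i) (n (g i)) i, fun k x hx => hpat k (n k) x fun i hi => ?_⟩
  have hgi : g i = k := hgn k hi
  simpa only [hgi] using hx i hgi

lemma IsMeagre.exists_antitone_isOpen_dense {X : Type*} [TopologicalSpace X] {s : Set X}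
    (hs : IsMeagre s) : ∃ U : ℕ → Set X, (∀ k, IsOpen (U k)) ∧ (∀ k, Dense (U k)) ∧
      Antitone U ∧ Disjoint s (⋂ k, U k) := by
  obtain ⟨S, hSo, hSd, hSc, hS⟩ := mem_residual_iff.1 hs
  obtain ⟨f, hf⟩ := (hSc.insert univ).exists_eq_range (insert_nonempty _ _)
  have hfS : ∀ j, f j = univ ∨ f j ∈ S := fun j =>
    (hf.symm ▸ mem_range_self j : f j ∈ insert univ S)
  have hfo : ∀ j, IsOpen (f j) := fun j => (hfS j).elim (· ▸ isOpen_univ) (hSo _)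
  have hfd : ∀ j, Dense (f j) := fun j => (hfS j).elim (· ▸ dense_univ) (hSd _)
  refine ⟨fun k => ⋂₀ (f '' Iic k), fun k => ((finite_Iic k).image f).isOpen_sInter ?_,
    fun k => ((finite_Iic k).image f).dense_sInter ?_ ?_,
    fun k l hkl => sInter_subset_sInter (image_mono (Iic_subset_Iic.2 hkl)), ?_⟩
  · exact forall_mem_image.2 fun j _ => hfo j
  · exact forall_mem_image.2 fun j _ => hfo j
  · exact forall_mem_image.2 fun j _ => hfd j
  · refine subset_compl_iff_disjoint_left.1
      (Subset.trans (fun x hx => mem_sInter.2 fun t ht => ?_) hS)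
    obtain ⟨j, rfl⟩ : t ∈ range f := hf ▸ mem_insert_of_mem _ ht
    exact mem_iInter.1 hx j _ (mem_image_of_mem f self_mem_Iic)

lemma exists_finToOne_of_isMeagre {𝓕 : Set (Set ℕ)} (h𝓕 : ∀ A ∈ 𝓕, ∀ B, A ⊆ B → B ∈ 𝓕)
    (hm : IsMeagre (chiSet '' 𝓕)) :
    ∃ g : ℕ → ℕ, FinToOne g ∧ ∀ A ∈ 𝓕, {k | Disjoint A (g ⁻¹' {k})}.Finite := by
  obtain ⟨U, hUo, hUd, hU, hdisj⟩ := hm.exists_antitone_isOpen_dense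
  obtain ⟨g, hg, p, hp⟩ := exists_finToOne_pattern_forcing_mem hUo hUd
  refine ⟨g, hg, fun A hA => not_infinite.1 fun hinf => ?_⟩
  have hB : chiSet (A ∪ {i | p i}) ∈ ⋂ j, U j := mem_iInter.2 fun j => by
    obtain ⟨k, hk, hjk⟩ := hinf.exists_gt j
    refine hU hjk.le (hp k _ fun i hi => ?_)
    simp [chiSet, disjoint_right.1 hk hi]
  exact disjoint_left.1 hdisj ⟨_, h𝓕 A hA _ subset_union_left, rfl⟩ hB

/-- The family of measure-one sets of a free measure, viewed as a subset of the Cantor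
space `ℕ → Bool` (with the product topology), is non-meager. -/
theorem stmt_11 (μ : Set ℕ → ℝ) (hμ : IsMeasure μ) (hfree : IsFree μ) :
    ¬ IsMeagre (chiSet '' {A : Set ℕ | μ A = 1}) := by
  intro hm
  obtain ⟨g, hg, hfib⟩ := exists_finToOne_of_isMeagre
    (fun A hA B hAB => le_antisymm (hμ.le_one B) (hA ▸ hμ.mono hAB)) hm
  obtain ⟨D, hD, hD0⟩ := (hμ.preimage g).exists_infinite_null (hfree.preimage hg)
  have hDc : μ (g ⁻¹' D)ᶜ = 1 := by rw [hμ.compl, hD0, sub_zero]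
  exact hD ((hfib _ hDc).subset fun k hk =>
    disjoint_compl_left.mono_right (preimage_mono (singleton_subset_iff.2 hk)))
end

section
/- Let μ be a free measure on ℕ and δ ∈ [0,1) such that every partition of ℕ into finite sets has a selector S with μ(S) > δ. Then there exists ε > δ such that every partition of ℕ into finite sets has a selector S with μ(S) ≥ ε. -/
open Filter

/-!
Suppose not. Then for every `n` there is a partition into finite sets, i.e. a finite-to-one map
`pₙ`, all of whose selectors have measure `< δ + 1/(n+1)`. Cut `ℕ` into consecutive finite
intervals, indexed by a finite-to-one map `f`, so that a fiber of `pₙ` through a point of level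
`≥ n` reaches at most one level higher. The pushforward of `μ` along `f` is again a free measure,
so it has an infinite null set `R` (halve an infinite set again and again). Merging each run of
intervals between consecutive elements of `R` gives one partition into finite sets; take a
selector `S` of it with `μ S > δ`. For each `n`, removing from `S` the null set `f⁻¹ R` and a
finite set leaves a selector of `pₙ`, so `μ S ≤ δ + 1/(n+1)` for all `n`.
-/

lemma FinToOne.finite_preimage {f : ℕ → ℕ} (hf : FinToOne f) {X : Set ℕ} (hX : X.Finite) :
    (f ⁻¹' X).Finite := by
  rw [← Set.biUnion_of_singleton X, Set.preimage_iUnion₂]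
  exact hX.biUnion fun n _ => hf n

lemma FinToOne.comp {f g : ℕ → ℕ} (hg : FinToOne g) (hf : FinToOne f) : FinToOne (g ∘ f) :=
  fun n => hf.finite_preimage (hg n)

lemma IsFree.comp_preimage {μ : Set ℕ → ℝ} (hfree : IsFree μ) {f : ℕ → ℕ} (hf : FinToOne f) :
    IsFree fun X => μ (f ⁻¹' X) :=
  fun _ hX => hfree _ (hf.finite_preimage hX)

namespace IsMeasure

variable {μ : Set ℕ → ℝ}

lemma mono_s16 (hμ : IsMeasure μ) {X Y : Set ℕ} (hXY : X ⊆ Y) : μ X ≤ μ Y := by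
  have h := hμ.2.2 X (Y \ X) Set.disjoint_sdiff_right
  rw [Set.union_sdiff_cancel hXY] at h
  linarith [(hμ.1 (Y \ X)).1]

lemma union_le (hμ : IsMeasure μ) (X Y : Set ℕ) : μ (X ∪ Y) ≤ μ X + μ Y := by
  have h := hμ.2.2 X (Y \ X) Set.disjoint_sdiff_right
  rw [Set.union_sdiff_self] at h
  linarith [hμ.mono_s16 (Set.sdiff_subset : Y \ X ⊆ Y)]

lemma apply_diff_null (hμ : IsMeasure μ) (X : Set ℕ) {N : Set ℕ} (hN : μ N = 0) :
    μ (X \ N) = μ X := by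
  refine le_antisymm (hμ.mono_s16 Set.sdiff_subset) ?_
  calc μ X ≤ μ (X \ N ∪ N) := hμ.mono_s16 (by simp)
    _ ≤ μ (X \ N) + μ N := hμ.union_le _ _
    _ = μ (X \ N) := by rw [hN, add_zero]

lemma comp_preimage (hμ : IsMeasure μ) (f : ℕ → ℕ) : IsMeasure fun X => μ (f ⁻¹' X) :=
  ⟨fun _ => hμ.1 _, hμ.2.1, fun _ _ hXY => hμ.2.2 _ _ (hXY.preimage f)⟩

lemma exists_infinite_subset_le_half (hμ : IsMeasure μ) {Y : Set ℕ} (hY : Y.Infinite) :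
    ∃ Z ⊆ Y, Z.Infinite ∧ μ Z ≤ μ Y / 2 := by
  obtain ⟨Z₁, Z₂, hunion, hdisj, hcard⟩ := hY.exists_union_disjoint_cardinal_eq_of_infinite
  have hinf : Z₁.Infinite ∧ Z₂.Infinite := by
    have hfin : Z₁.Finite ↔ Z₂.Finite := by
      simp only [← Cardinal.lt_aleph0_iff_set_finite, hcard]
    constructor <;> intro h <;> exact hY (hunion ▸ Set.Finite.union (by tauto) (by tauto))
  have hsum := hμ.2.2 Z₁ Z₂ hdisj
  rw [hunion] at hsum
  rcases le_total (μ Z₁) (μ Z₂) with h | h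
  · exact ⟨Z₁, hunion ▸ Set.subset_union_left, hinf.1, by linarith⟩
  · exact ⟨Z₂, hunion ▸ Set.subset_union_right, hinf.2, by linarith⟩

lemma exists_antitone_infinite_le_half_pow (hμ : IsMeasure μ) :
    ∃ Y : ℕ → Set ℕ, Antitone Y ∧ (∀ t, (Y t).Infinite) ∧ ∀ t, μ (Y t) ≤ (1 / 2) ^ t := by
  choose half hsub hinf hle using fun Y : {Y : Set ℕ // Y.Infinite} =>
    hμ.exists_infinite_subset_le_half Y.2
  let Y : ℕ → {Y : Set ℕ // Y.Infinite} :=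
    fun t => Nat.rec ⟨Set.univ, Set.infinite_univ⟩ (fun _ Y => ⟨half Y, hinf Y⟩) t
  refine ⟨fun t => (Y t).1, antitone_nat_of_succ_le fun t => hsub (Y t), fun t => (Y t).2,
    fun t => ?_⟩
  induction t with
  | zero => simp [Y, hμ.2.1]
  | succ t ih =>
    calc μ (Y (t + 1)).1 ≤ μ (Y t).1 / 2 := hle (Y t)
      _ ≤ (1 / 2) ^ t / 2 := by gcongr
      _ = (1 / 2) ^ (t + 1) := by ring

lemma exists_infinite_null_s16 (hμ : IsMeasure μ) (hfree : IsFree μ) :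
    ∃ R : Set ℕ, R.Infinite ∧ μ R = 0 := by
  obtain ⟨Y, hanti, hinf, hle⟩ := hμ.exists_antitone_infinite_le_half_pow
  choose b hbY hb using fun t => (hinf t).exists_gt t
  refine ⟨Set.range b, Set.infinite_of_not_bddAbove ?_, ?_⟩
  · rintro ⟨N, hN⟩
    exact (hb N).not_ge (hN ⟨N, rfl⟩)
  have htail (t : ℕ) : Set.range b ⊆ Y t ∪ b '' Set.Iio t := by
    rintro _ ⟨s, rfl⟩
    rcases lt_or_ge s t with hst | hts
    · exact Or.inr ⟨s, hst, rfl⟩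
    · exact Or.inl (hanti hts (hbY s))
  have hbound (t : ℕ) : μ (Set.range b) ≤ (1 / 2) ^ t :=
    calc μ (Set.range b) ≤ μ (Y t) + μ (b '' Set.Iio t) :=
          (hμ.mono_s16 (htail t)).trans (hμ.union_le _ _)
      _ ≤ (1 / 2) ^ t := by rw [hfree _ ((Set.finite_Iio t).image b), add_zero]; exact hle t
  exact le_antisymm
    (ge_of_tendsto' (tendsto_pow_atTop_nhds_zero_of_lt_one (by norm_num) (by norm_num)) hbound)
    (hμ.1 _).1

end IsMeasure

lemma IsPartition.exists_eq_fiber {A : ℕ → Set ℕ} (hA : IsPartition A) :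
    ∃ p : ℕ → ℕ, ∀ i, A i = p ⁻¹' {i} := by
  have hcover (x : ℕ) : ∃ i, x ∈ A i := Set.mem_iUnion.mp (hA.2 ▸ Set.mem_univ x)
  choose p hp using hcover
  refine ⟨p, fun i => Set.ext fun x => ⟨fun hx => ?_, fun hx => hx ▸ hp x⟩⟩
  by_contra hne
  exact Set.disjoint_left.mp (hA.1 hne) (hp x) hx

lemma isPartition_fiber (p : ℕ → ℕ) : IsPartition fun i => p ⁻¹' {i} :=
  ⟨fun _ _ hij => Set.disjoint_singleton.mpr hij |>.preimage p, by ext; simp⟩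

lemma isSelector_fiber_iff {S : Set ℕ} {p : ℕ → ℕ} :
    IsSelector S (fun i => p ⁻¹' {i}) ↔ S.InjOn p :=
  ⟨fun h x hx _ hy hxy => h (p x) ⟨hx, rfl⟩ ⟨hy, hxy.symm⟩,
    fun h _ _ hx _ hy => h hx.1 hy.1 (hx.2.trans hy.2.symm)⟩

section IntervalIndex

variable {m : ℕ → ℕ}

/-- The index `i` of the interval `[m i, m (i + 1))` containing `x`, for `m` strictly monotone
with `m 0 = 0`. -/
def intervalIndex (m : ℕ → ℕ) (x : ℕ) : ℕ := Nat.findGreatest (fun i => m i ≤ x) x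

lemma apply_intervalIndex_le (hm0 : m 0 = 0) (x : ℕ) : m (intervalIndex m x) ≤ x :=
  Nat.findGreatest_spec (P := fun i => m i ≤ x) (Nat.zero_le x) (by rw [hm0]; exact Nat.zero_le x)

lemma lt_apply_intervalIndex_succ (hm : StrictMono m) (x : ℕ) :
    x < m (intervalIndex m x + 1) := by
  by_cases hx : intervalIndex m x + 1 ≤ x
  · exact not_le.mp (Nat.findGreatest_is_greatest (P := fun i => m i ≤ x) (Nat.lt_succ_self _) hx)
  · exact (not_le.mp hx).trans_le (hm.id_le _)

lemma intervalIndex_lt_iff (hm : StrictMono m) (hm0 : m 0 = 0) {x k : ℕ} :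
    intervalIndex m x < k ↔ x < m k :=
  ⟨fun h => (lt_apply_intervalIndex_succ hm x).trans_le (hm.monotone h),
    fun h => hm.lt_iff_lt.mp ((apply_intervalIndex_le hm0 x).trans_lt h)⟩

lemma finToOne_intervalIndex (hm : StrictMono m) (hm0 : m 0 = 0) : FinToOne (intervalIndex m) :=
  fun i => (Set.finite_Iio (m (i + 1))).subset fun _ hx =>
    (intervalIndex_lt_iff hm hm0).mp (Nat.lt_succ_of_le (le_of_eq hx))

end IntervalIndex

lemma exists_finToOne_levels {p : ℕ → ℕ → ℕ} (hp : ∀ n, FinToOne (p n)) :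
    ∃ f : ℕ → ℕ, FinToOne f ∧ ∀ n x y, n ≤ f x → p n x = p n y → f y ≤ f x + 1 := by
  have hbound (t : ℕ) : ∃ N, t < N ∧ ∀ n ≤ t, ∀ x ≤ t, ∀ y, p n x = p n y → y < N := by
    have hfin : (⋃ n ∈ Set.Iic t, p n ⁻¹' (p n '' Set.Iic t)).Finite :=
      (Set.finite_Iic t).biUnion fun n _ => (hp n).finite_preimage ((Set.finite_Iic t).image _)
    obtain ⟨N, hN⟩ := hfin.bddAbove
    refine ⟨max t N + 1, by omega, fun n hn x hx y hxy => ?_⟩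
    have : y ≤ N := hN (Set.mem_biUnion hn ⟨x, hx, hxy⟩)
    omega
  choose bound hlt hbound using hbound
  obtain ⟨m, hm0, hmsucc⟩ : ∃ m : ℕ → ℕ, m 0 = 0 ∧ ∀ k, m (k + 1) = bound (m k) :=
    ⟨fun k => Nat.rec 0 (fun _ => bound) k, rfl, fun _ => rfl⟩
  have hm : StrictMono m := strictMono_nat_of_lt_succ fun k => hmsucc k ▸ hlt (m k)
  refine ⟨intervalIndex m, finToOne_intervalIndex hm hm0, fun n x y hn hxy => ?_⟩
  have hn' : n ≤ m (intervalIndex m x + 1) :=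
    hn.trans ((Nat.le_succ _).trans (hm.id_le _))
  have hy : y < m (intervalIndex m x + 2) :=
    hmsucc _ ▸ hbound _ n hn' x (lt_apply_intervalIndex_succ hm x).le y hxy
  have := (intervalIndex_lt_iff hm hm0).mpr hy
  omega

lemma Set.Infinite.exists_finToOne_apply_succ_eq {R : Set ℕ} (hR : R.Infinite) :
    ∃ g : ℕ → ℕ, FinToOne g ∧ ∀ i, i + 1 ∉ R → g (i + 1) = g i := by
  classical
  refine ⟨fun i => Nat.count (· ∈ R) (i + 1), fun k => ?_, fun i hi => by
    simp [Nat.count_succ _ (i + 1), hi]⟩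
  refine (Set.finite_Iio (Nat.nth (· ∈ R) k)).subset fun i hi => ?_
  by_contra hlt
  have hle : Nat.nth (· ∈ R) k ≤ i := not_lt.mp hlt
  have hmono := Nat.count_monotone (· ∈ R) (Nat.add_le_add_right hle 1)
  rw [Nat.count_succ, Nat.count_nth_of_infinite (p := (· ∈ R)) hR,
    if_pos (Nat.nth_mem_of_infinite (p := (· ∈ R)) hR k)] at hmono
  simp only [Set.mem_preimage, Set.mem_singleton_iff] at hi
  omega

lemma injOn_sdiff_of_levels {f g q : ℕ → ℕ} {R S : Set ℕ} {n : ℕ}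
    (hf : ∀ x y, n ≤ f x → q x = q y → f y ≤ f x + 1)
    (hgR : ∀ i, i + 1 ∉ R → g (i + 1) = g i) (hS : S.InjOn (g ∘ f)) :
    ((S \ f ⁻¹' R) \ q ⁻¹' (q '' (f ⁻¹' Set.Iio n))).InjOn q := by
  intro x hx y hy hxy
  wlog hle : f x ≤ f y generalizing x y
  · exact (this hy hx hxy.symm (le_of_not_ge hle)).symm
  have hnx : n ≤ f x := not_lt.mp fun h => hx.2 ⟨x, h, rfl⟩
  refine hS hx.1.1 hy.1.1 (show g (f x) = g (f y) from ?_)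
  rcases (show f y = f x ∨ f y = f x + 1 by have := hf x y hnx hxy; omega) with h | h
  · rw [h]
  · rw [h, hgR _ (h ▸ hy.1.2)]

theorem stmt_16_general (μ : Set ℕ → ℝ) (hμ : IsMeasure μ) (hfree : IsFree μ) (δ : ℝ)
    (h : ∀ A : ℕ → Set ℕ, IsPartition A → (∀ n, (A n).Finite) →
      ∃ S : Set ℕ, IsSelector S A ∧ δ < μ S) :
    ∃ ε : ℝ, δ < ε ∧ ∀ A : ℕ → Set ℕ, IsPartition A → (∀ n, (A n).Finite) →
      ∃ S : Set ℕ, IsSelector S A ∧ ε ≤ μ S := by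
  by_contra! hcon
  have hsmall (n : ℕ) : ∃ p : ℕ → ℕ, FinToOne p ∧ ∀ S, S.InjOn p → μ S < δ + 1 / (n + 1) := by
    obtain ⟨A, hA, hAfin, hAsmall⟩ := hcon (δ + 1 / (n + 1))
      (lt_add_of_pos_right δ Nat.one_div_pos_of_nat)
    obtain ⟨p, hp⟩ := hA.exists_eq_fiber
    obtain rfl : A = fun i => p ⁻¹' {i} := funext hp
    exact ⟨p, hAfin, fun S hS => hAsmall S (isSelector_fiber_iff.mpr hS)⟩
  choose p hp hpsmall using hsmall
  obtain ⟨f, hf, hlevel⟩ := exists_finToOne_levels hp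
  obtain ⟨R, hRinf, hRnull⟩ := (hμ.comp_preimage f).exists_infinite_null_s16 (hfree.comp_preimage hf)
  obtain ⟨g, hg, hgR⟩ := hRinf.exists_finToOne_apply_succ_eq
  obtain ⟨S, hS, hδS⟩ := h _ (isPartition_fiber (g ∘ f)) (hg.comp hf)
  have hT (n : ℕ) : μ (S \ f ⁻¹' R) < δ + 1 / (n + 1) := by
    have hF := (hp n).finite_preimage ((hf.finite_preimage (Set.finite_Iio n)).image (p n))
    rw [← hμ.apply_diff_null _ (hfree _ hF)]
    exact hpsmall n _ (injOn_sdiff_of_levels (hlevel n) hgR (isSelector_fiber_iff.mp hS))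
  have hTδ : μ (S \ f ⁻¹' R) ≤ δ := le_of_forall_pos_lt_add fun ε hε => by
    obtain ⟨n, hn⟩ := exists_nat_one_div_lt hε
    linarith [hT n]
  rw [hμ.apply_diff_null S hRnull] at hTδ
  linarith

/-- If every partition of `ℕ` into finite sets has a selector of measure strictly
greater than `δ`, then there is `ε > δ` such that every partition into finite sets
has a selector of measure at least `ε`. -/
theorem stmt_16 (μ : Set ℕ → ℝ) (hμ : IsMeasure μ) (hfree : IsFree μ) (δ : ℝ)
    (hδ0 : 0 ≤ δ) (hδ1 : δ < 1)
    (h : ∀ A : ℕ → Set ℕ, IsPartition A → (∀ n, (A n).Finite) →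
      ∃ S : Set ℕ, IsSelector S A ∧ δ < μ S) :
    ∃ ε : ℝ, δ < ε ∧ ∀ A : ℕ → Set ℕ, IsPartition A → (∀ n, (A n).Finite) →
      ∃ S : Set ℕ, IsSelector S A ∧ ε ≤ μ S :=
  stmt_16_general μ hμ hfree δ h
end
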